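/- Theorem 2 (second part, strict inequality): if N ≥ 2, all amplitudes are nonnegative (u i ≥ 0 for all i), and the squared amplitudes are not all equal (there exist i, j with (u i)² ≠ (u j)²), then for any two distinct positions w ≠ w' we have E[X_w² · X_{w'}⁴] < m₂ · m₄. -/

import Mathlib

/-!
For `w ≠ w'` the pair `(σ w, σ w')` is uniformly distributed on the ordered pairs of distinct
indices: `Perm` acts 2-transitively, so all fibres of `σ ↦ (σ w, σ w')` have the same size.
With `a = u²` the expectation is therefore `((∑ a)(∑ a²) - ∑ a³) / (N (N - 1))`, and the claim
becomes the strict Chebyshev inequality `(∑ a)(∑ a²) < N ∑ a³`. It is strict because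
`(aᵢ - aⱼ)(aᵢ² - aⱼ²) = (aᵢ - aⱼ)²(aᵢ + aⱼ)` is nonnegative, and positive when `aᵢ ≠ aⱼ`.
-/

/-- Expectation of a real-valued random variable on the finite probability space
`Equiv.Perm (Fin N)` equipped with the uniform probability measure. -/
noncomputable def permExpect (N : ℕ) (f : Equiv.Perm (Fin N) → ℝ) : ℝ :=
  (∑ σ : Equiv.Perm (Fin N), f σ) / (Fintype.card (Equiv.Perm (Fin N)) : ℝ)

/-- Empirical `k`-th moment of the amplitude block `u`. -/
noncomputable def empMoment (N : ℕ) (u : Fin N → ℝ) (k : ℕ) : ℝ :=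
  (1 / (N : ℝ)) * ∑ i : Fin N, (u i) ^ k

open Finset Equiv

section PermPair

variable {α : Type*} [Fintype α] [DecidableEq α] {w w' : α}

lemma card_perm_apply_pair_eq (hw : w ≠ w') {p : α × α} (hp : p ∈ univ.offDiag) :
    #{σ : Perm α | (σ w, σ w') = p} = #{σ : Perm α | (σ w, σ w') = (w, w')} := by
  obtain ⟨i, j⟩ := p
  obtain ⟨τ, rfl, rfl⟩ := MulAction.is_two_pretransitive_iff.mp
    (Perm.isMultiplyPretransitive α 2) hw (mem_offDiag.mp hp).2.2
  refine card_nbij' (τ⁻¹ * ·) (τ * ·) ?_ ?_ (fun σ _ => by simp) (fun σ _ => by simp)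
  · intro σ; simp_all
  · intro σ; simp_all

lemma sum_perm_apply_pair {M : Type*} [AddCommMonoid M] (hw : w ≠ w') (f : α → α → M) :
    ∑ σ : Perm α, f (σ w) (σ w')
      = #{σ : Perm α | (σ w, σ w') = (w, w')} • ∑ p ∈ univ.offDiag, f p.1 p.2 := by
  have hmaps : ∀ σ ∈ (univ : Finset (Perm α)), (σ w, σ w') ∈ univ.offDiag := by
    simpa using hw
  rw [← sum_fiberwise_of_maps_to hmaps, smul_sum]
  refine sum_congr rfl fun p hp => ?_
  rw [sum_congr rfl (g := fun _ => f p.1 p.2) fun σ hσ => by simp [← (mem_filter.mp hσ).2],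
    sum_const, card_perm_apply_pair_eq hw hp]

lemma card_perm_eq_card_mul_card_offDiag (hw : w ≠ w') :
    Fintype.card (Perm α)
      = #{σ : Perm α | (σ w, σ w') = (w, w')} * #(univ : Finset α).offDiag := by
  have h := sum_perm_apply_pair hw (M := ℕ) (fun _ _ => 1)
  simp only [sum_const, card_univ, smul_eq_mul, mul_one] at h
  exact h

end PermPair

lemma permExpect_apply_pair {N : ℕ} {w w' : Fin N} (hw : w ≠ w') (f : Fin N → Fin N → ℝ) :
    permExpect N (fun σ => f (σ w) (σ w'))
      = (∑ p ∈ univ.offDiag, f p.1 p.2) / (N * (N - 1)) := by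
  have hstab : (#{σ : Perm (Fin N) | (σ w, σ w') = (w, w')} : ℝ) ≠ 0 := by
    exact_mod_cast (card_pos.mpr ⟨1, by simp⟩).ne'
  have hoff : (#(univ : Finset (Fin N)).offDiag : ℝ) = N * (N - 1) := by
    rw [offDiag_card, card_univ, Fintype.card_fin, Nat.cast_sub (Nat.le_mul_self N)]
    push_cast; ring
  rw [permExpect, sum_perm_apply_pair hw, card_perm_eq_card_mul_card_offDiag hw, nsmul_eq_mul,
    Nat.cast_mul, hoff, mul_div_mul_left _ _ hstab]

lemma sum_offDiag_mul {ι R : Type*} [Fintype ι] [DecidableEq ι] [CommRing R] (a b : ι → R) :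
    ∑ p ∈ univ.offDiag, a p.1 * b p.2 = (∑ i, a i) * (∑ i, b i) - ∑ i, a i * b i := by
  rw [eq_sub_iff_add_eq, sum_mul_sum, ← sum_product', ← diag_union_offDiag,
    sum_union (disjoint_diag_offDiag _), sum_diag, add_comm]

lemma two_mul_card_mul_sum_mul_sub_eq_sum_sum {ι R : Type*} [Fintype ι] [CommRing R]
    (a b : ι → R) :
    2 * (Fintype.card ι * ∑ i, a i * b i - (∑ i, a i) * ∑ i, b i)
      = ∑ i, ∑ j, (a i - a j) * (b i - b j) := by
  have hexpand : ∀ i j,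
      (a i - a j) * (b i - b j) = a i * b i + a j * b j - (a i * b j + a j * b i) :=
    fun i j => by ring
  simp only [hexpand, sum_sub_distrib, sum_add_distrib, sum_const, card_univ, nsmul_eq_mul,
    ← sum_mul, ← mul_sum]
  ring

lemma sum_mul_sum_lt_card_mul_sum {ι R : Type*} [Fintype ι] [CommRing R] [LinearOrder R]
    [IsStrictOrderedRing R] {a b : ι → R} (hle : ∀ i j, 0 ≤ (a i - a j) * (b i - b j))
    (hlt : ∃ i j, 0 < (a i - a j) * (b i - b j)) :
    (∑ i, a i) * ∑ i, b i < Fintype.card ι * ∑ i, a i * b i := by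
  obtain ⟨i, j, hij⟩ := hlt
  have hpos : 0 < ∑ i, ∑ j, (a i - a j) * (b i - b j) :=
    sum_pos' (fun i _ => sum_nonneg fun j _ => hle i j)
      ⟨i, mem_univ _, sum_pos' (fun j _ => hle i j) ⟨j, mem_univ _, hij⟩⟩
  rw [← two_mul_card_mul_sum_mul_sub_eq_sum_sum] at hpos
  linarith

lemma sum_mul_sum_sq_lt_card_mul_sum_mul_sq {ι R : Type*} [Fintype ι] [CommRing R]
    [LinearOrder R] [IsStrictOrderedRing R] {a : ι → R} (ha : ∀ i, 0 ≤ a i)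
    (hne : ∃ i j, a i ≠ a j) :
    (∑ i, a i) * ∑ i, a i ^ 2 < Fintype.card ι * ∑ i, a i * a i ^ 2 := by
  have hfactor : ∀ i j, (a i - a j) * (a i ^ 2 - a j ^ 2) = (a i - a j) ^ 2 * (a i + a j) :=
    fun i j => by ring
  refine sum_mul_sum_lt_card_mul_sum (fun i j => ?_) ?_
  · rw [hfactor]; exact mul_nonneg (sq_nonneg _) (add_nonneg (ha i) (ha j))
  · obtain ⟨i, j, hij⟩ := hne
    refine ⟨i, j, ?_⟩
    rw [hfactor]
    have hsum : 0 < a i + a j := by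
      rcases (ha i).lt_or_eq with hi | hi
      · exact add_pos_of_pos_of_nonneg hi (ha j)
      · exact add_pos_of_nonneg_of_pos (ha i) ((ha j).lt_of_ne fun h => hij (hi.symm.trans h))
    exact mul_pos (sq_pos_of_ne_zero (sub_ne_zero.mpr hij)) hsum

theorem corr_second_fourth_lt_general (N : ℕ) (u : Fin N → ℝ)
    (hne : ∃ i j : Fin N, (u i) ^ 2 ≠ (u j) ^ 2)
    (w w' : Fin N) (hww' : w ≠ w') :
    permExpect N (fun σ => (u (σ w)) ^ 2 * (u (σ w')) ^ 4)
      < empMoment N u 2 * empMoment N u 4 := by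
  set a : Fin N → ℝ := fun i => u i ^ 2
  have hfour : ∀ i, u i ^ 4 = a i ^ 2 := fun i => by rw [← pow_mul]
  set A := (∑ i, a i) * ∑ i, a i ^ 2
  set B := ∑ i, a i * a i ^ 2
  have hcheb : A < N * B := by
    simpa using sum_mul_sum_sq_lt_card_mul_sum_mul_sq (fun i => sq_nonneg (u i)) hne
  have hN : (2 : ℝ) ≤ N := by exact_mod_cast Fin.nontrivial_iff_two_le.mp ⟨⟨w, w', hww'⟩⟩
  calc permExpect N (fun σ => u (σ w) ^ 2 * u (σ w') ^ 4)
      = (A - B) / (N * (N - 1)) := by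
        rw [← sum_offDiag_mul]
        simp only [hfour]
        exact permExpect_apply_pair hww' (fun i j => a i * a j ^ 2)
    _ < A / N ^ 2 := by
        rw [div_lt_div_iff₀ (by nlinarith) (by positivity)]
        nlinarith
    _ = empMoment N u 2 * empMoment N u 4 := by
        simp only [empMoment, hfour, A]
        ring

/-- Theorem 2, second part (strict inequality): for nonnegative amplitudes whose squares
are not all equal, for distinct positions `w ≠ w'`, `E[X_w² · X_{w'}⁴] < m₂·m₄`. -/
theorem corr_second_fourth_lt (N : ℕ) (hN : 2 ≤ N) (u : Fin N → ℝ)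
    (hpos : ∀ i, 0 ≤ u i)
    (hne : ∃ i j : Fin N, (u i) ^ 2 ≠ (u j) ^ 2)
    (w w' : Fin N) (hww' : w ≠ w') :
    permExpect N (fun σ => (u (σ w)) ^ 2 * (u (σ w')) ^ 4)
      < empMoment N u 2 * empMoment N u 4 :=
  corr_second_fourth_lt_general N u hne w w' hww'
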